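/- Let V be an intuitionistic computability model and f an evaluation with domain M. Then there exists a natural number e such that for all M-sentences A, B, C interpreted by f, e realizes the S-axiom (A→(B→C))→((A→B)→(A→C)). -/
import Mathlib


namespace GenReal

/-- An `n`-ary partial number-theoretic function. -/
abbrev PFn (n : ℕ) := (Fin n → ℕ) → Part ℕ

/-- Combine a vector of partial values into a partial vector of values. -/
def vecPart {n : ℕ} (f : Fin n → Part ℕ) : Part (Fin n → ℕ) :=
  ⟨∀ i, (f i).Dom, fun h i => (f i).get (h i)⟩

/-- A set `V` of partial number-theoretic functions presented by a numbering:
a pairing bijection `c` with unpairing functions `p1`, `p2`, index sets `Idx n ⊆ ℕ`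
and for each arity `n` a numbering `e ↦ φ n e` of the `n`-ary `V`-functions. -/
structure Numbering where
  c : ℕ → ℕ → ℕ
  p1 : ℕ → ℕ
  p2 : ℕ → ℕ
  cBij : Function.Bijective fun p : ℕ × ℕ => c p.1 p.2
  p1c : ∀ a b, p1 (c a b) = a
  p2c : ∀ a b, p2 (c a b) = b
  Idx : ℕ → Set ℕ
  φ : (n : ℕ) → ℕ → PFn n

namespace Numbering

variable (V : Numbering)

/-- `p` is an `n`-ary `V`-function, i.e. it has an index. -/
def IsV (n : ℕ) (p : PFn n) : Prop := ∃ e ∈ V.Idx n, ∀ x, V.φ n e x = p x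

/-- (BF): projections, the pairing `c` and the unpairings `p1`, `p2` are `V`-functions. -/
def BF : Prop :=
  (∀ (n : ℕ) (i : Fin n), V.IsV n fun x => Part.some (x i)) ∧
  (V.IsV 2 fun x => Part.some (V.c (x 0) (x 1))) ∧
  (V.IsV 1 fun x => Part.some (V.p1 (x 0))) ∧
  (V.IsV 1 fun x => Part.some (V.p2 (x 0)))

/-- (Cm): composition of `V`-functions is a `V`-function, with an index obtainable
by a `V`-function. -/
def Cm : Prop :=
  ∀ (n : ℕ) (m : Fin n → ℕ),
    ∃ s : PFn (n + 1), V.IsV (n + 1) s ∧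
      ∀ e ∈ V.Idx n, ∀ es : Fin n → ℕ, (∀ i, es i ∈ V.Idx (m i)) →
        ∃ v, s (Fin.cons e es) = Part.some v ∧ v ∈ V.Idx (Finset.univ.sup m) ∧
          ∀ x : Fin (Finset.univ.sup m) → ℕ,
            V.φ (Finset.univ.sup m) v x =
              (vecPart fun i => V.φ (m i) (es i)
                  fun j => x (Fin.castLE (Finset.le_sup (Finset.mem_univ i)) j)).bind
                (V.φ n e)

/-- (Cn): every constant (0-ary) function is a `V`-function with an index obtainable
by a `V`-function. -/
def Cn : Prop :=
  ∃ s : PFn 1, V.IsV 1 s ∧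
    ∀ k : ℕ, ∃ v, s ![k] = Part.some v ∧ v ∈ V.Idx 0 ∧
      ∀ x : Fin 0 → ℕ, V.φ 0 v x = Part.some k

/-- (Cs): an index of a "conditional function" (case distinction on whether the last
argument is zero) can be obtained by a `V`-function. -/
def Cs : Prop :=
  ∀ n : ℕ, ∃ s : PFn 2, V.IsV 2 s ∧
    ∀ e₁ ∈ V.Idx n, ∀ e₂ ∈ V.Idx n,
      ∃ v, s ![e₁, e₂] = Part.some v ∧ v ∈ V.Idx (n + 1) ∧
        ∀ x : Fin (n + 1) → ℕ,
          V.φ (n + 1) v x =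
            if x (Fin.last n) = 0 then V.φ n e₁ (Fin.init x) else V.φ n e₂ (Fin.init x)

/-- `V` is a basic computability model. -/
def Basic : Prop := V.BF ∧ V.Cm ∧ V.Cn ∧ V.Cs

/-- `u` is overuniversal for the set of all `n`-ary `V`-functions. -/
def Overuniversal (n : ℕ) (u : PFn (n + 1)) : Prop :=
  ∀ e ∈ V.Idx n, ∀ a : Fin n → ℕ, (V.φ n e a).Dom → u (Fin.cons e a) = V.φ n e a

/-- (U): there is an overuniversal `V`-function for the set of all unary `V`-functions. -/
def U : Prop := ∃ u : PFn 2, V.IsV 2 u ∧ V.Overuniversal 1 u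

/-- `V` is an intuitionistic computability model. -/
def Intu : Prop := V.Basic ∧ V.U

end Numbering

end GenReal

namespace GenReal

/-- Formulas of the language of IPC (predicate symbols of every arity indexed by
naturals; terms are variables, indexed by naturals). -/
inductive Fml where
  | bot : Fml
  | top : Fml
  | pred (P : ℕ) (n : ℕ) (ts : Fin n → ℕ) : Fml
  | and (A B : Fml) : Fml
  | or (A B : Fml) : Fml
  | imp (A B : Fml) : Fml
  | all (x : ℕ) (A : Fml) : Fml
  | ex (x : ℕ) (A : Fml) : Fml

namespace Fml

/-- Size of a formula (used as fuel for the realizability recursion). -/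
def size : Fml → ℕ
  | bot => 1
  | top => 1
  | pred _ _ _ => 1
  | and A B => A.size + B.size + 1
  | or A B => A.size + B.size + 1
  | imp A B => A.size + B.size + 1
  | all _ A => A.size + 1
  | ex _ A => A.size + 1

/-- Strip the maximal prefix of universal quantifiers. -/
def strip : Fml → List ℕ × Fml
  | all x A => (x :: (strip A).1, (strip A).2)
  | A => ([], A)

end Fml

/-- `x` occurs free in a formula. -/
def FreeIn (x : ℕ) : Fml → Prop
  | Fml.bot => False
  | Fml.top => False
  | Fml.pred _ _ ts => ∃ i, ts i = x
  | Fml.and A B => FreeIn x A ∨ FreeIn x B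
  | Fml.or A B => FreeIn x A ∨ FreeIn x B
  | Fml.imp A B => FreeIn x A ∨ FreeIn x B
  | Fml.all z A => x ≠ z ∧ FreeIn x A
  | Fml.ex z A => x ≠ z ∧ FreeIn x A

/-- A sentence: a formula with no free variables. -/
def Fml.Closed (A : Fml) : Prop := ∀ x, ¬ FreeIn x A

/-- An evaluation: each `n`-ary predicate symbol gets a generalized predicate,
i.e. a map from `n`-tuples to sets of natural numbers. -/
abbrev Eval := ℕ → (n : ℕ) → (Fin n → ℕ) → Set ℕ

/-- Update an environment at a list of variables by a list of values
(later, i.e. inner, updates override earlier ones). -/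
def updEnv : (ℕ → ℕ) → List ℕ → List ℕ → (ℕ → ℕ)
  | ρ, x :: xs, a :: as => updEnv (Function.update ρ x a) xs as
  | ρ, _, _ => ρ

/-- Fueled definition of `V`-realizability of a formula over an evaluation `f`
with domain `M`, relative to an environment `ρ` assigning elements of `M`
to the variables. -/
def RzF (V : Numbering) (M : Set ℕ) (f : Eval) : ℕ → Fml → (ℕ → ℕ) → ℕ → Prop
  | 0, _, _, _ => False
  | _ + 1, Fml.bot, _, _ => False
  | _ + 1, Fml.top, _, _ => True
  | _ + 1, Fml.pred P n ts, ρ, e => e ∈ f P n fun i => ρ (ts i)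
  | k + 1, Fml.and A B, ρ, e => RzF V M f k A ρ (V.p1 e) ∧ RzF V M f k B ρ (V.p2 e)
  | k + 1, Fml.or A B, ρ, e =>
      (V.p1 e = 0 ∧ RzF V M f k A ρ (V.p2 e)) ∨ (V.p1 e = 1 ∧ RzF V M f k B ρ (V.p2 e))
  | k + 1, Fml.imp A B, ρ, e =>
      e ∈ V.Idx 1 ∧ ∀ s : ℕ, RzF V M f k A ρ s →
        ∃ v, V.φ 1 e ![s] = Part.some v ∧ RzF V M f k B ρ v
  | k + 1, Fml.ex x A, ρ, e =>
      V.p1 e ∈ M ∧ RzF V M f k A (Function.update ρ x (V.p1 e)) (V.p2 e)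
  | k + 1, Fml.all x A, ρ, e =>
      match Fml.strip A with
      | (ys, Fml.imp B C) =>
          e ∈ V.Idx ((x :: ys).length + 1) ∧
            ∀ a : Fin (x :: ys).length → ℕ, (∀ i, a i ∈ M) → ∀ s : ℕ,
              RzF V M f k B (updEnv ρ (x :: ys) (List.ofFn a)) s →
                ∃ v, V.φ ((x :: ys).length + 1) e (Fin.snoc a s) = Part.some v ∧
                  RzF V M f k C (updEnv ρ (x :: ys) (List.ofFn a)) v
      | (ys, D) =>
          e ∈ V.Idx ((x :: ys).length + 1) ∧
            ∀ a : Fin (x :: ys).length → ℕ, (∀ i, a i ∈ M) → ∀ s : ℕ,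
              ∃ v, V.φ ((x :: ys).length + 1) e (Fin.snoc a s) = Part.some v ∧
                RzF V M f k D (updEnv ρ (x :: ys) (List.ofFn a)) v

/-- `e` `V`-realizes the formula `A` on the evaluation `f` with domain `M`,
relative to the environment `ρ`. -/
def Rz (V : Numbering) (M : Set ℕ) (f : Eval) (A : Fml) (ρ : ℕ → ℕ) (e : ℕ) : Prop :=
  RzF V M f (A.size + 1) A ρ e

end GenReal

namespace GenReal


lemma size_pos (A : Fml) : 1 ≤ A.size := by
  cases A <;> simp [Fml.size]

lemma strip_snd_size (A : Fml) : (Fml.strip A).2.size ≤ A.size := by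
  induction A with
  | all x A ih => exact le_trans ih (Nat.le_succ _)
  | _ => simp [Fml.strip]

lemma rzF_stable (V : Numbering) (M : Set ℕ) (f : Eval) :
    ∀ (n : ℕ) (X : Fml), X.size ≤ n →
      ∀ (k₁ k₂ : ℕ), X.size ≤ k₁ → X.size ≤ k₂ → ∀ (ρ : ℕ → ℕ) (e : ℕ),
        (RzF V M f k₁ X ρ e ↔ RzF V M f k₂ X ρ e) := by
  intro n
  induction n with
  | zero => intro X hX; have := size_pos X; omega
  | succ n ih =>
    intro X hX k₁ k₂ h1 h2 ρ e
    obtain ⟨k₁, rfl⟩ : ∃ k, k₁ = k + 1 := ⟨k₁ - 1, by have := size_pos X; omega⟩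
    obtain ⟨k₂, rfl⟩ : ∃ k, k₂ = k + 1 := ⟨k₂ - 1, by have := size_pos X; omega⟩
    cases X with
    | bot => simp [RzF]
    | top => simp [RzF]
    | pred P m ts => simp [RzF]
    | and A B =>
        have hA := size_pos A; have hB := size_pos B
        simp only [Fml.size] at hX h1 h2
        simp only [RzF]
        exact and_congr (ih A (by omega) k₁ k₂ (by omega) (by omega) ρ _)
          (ih B (by omega) k₁ k₂ (by omega) (by omega) ρ _)
    | or A B =>
        have hA := size_pos A; have hB := size_pos B
        simp only [Fml.size] at hX h1 h2
        simp only [RzF]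
        exact or_congr
          (and_congr Iff.rfl (ih A (by omega) k₁ k₂ (by omega) (by omega) ρ _))
          (and_congr Iff.rfl (ih B (by omega) k₁ k₂ (by omega) (by omega) ρ _))
    | imp A B =>
        have hA := size_pos A; have hB := size_pos B
        simp only [Fml.size] at hX h1 h2
        simp only [RzF]
        exact and_congr Iff.rfl (forall_congr' fun s =>
          imp_congr (ih A (by omega) k₁ k₂ (by omega) (by omega) ρ s)
            (exists_congr fun v => and_congr Iff.rfl
              (ih B (by omega) k₁ k₂ (by omega) (by omega) ρ v)))
    | ex x A =>
        have hA := size_pos A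
        simp only [Fml.size] at hX h1 h2
        simp only [RzF]
        exact and_congr Iff.rfl (ih A (by omega) k₁ k₂ (by omega) (by omega) _ _)
    | all x A =>
        have hA := size_pos A
        simp only [Fml.size] at hX h1 h2
        have hD := strip_snd_size A
        simp only [RzF]
        rcases hst : Fml.strip A with ⟨ys, D⟩
        rw [hst] at hD
        cases D with
        | imp B C =>
            have hB := size_pos B; have hC := size_pos C
            simp only [Fml.size] at hD
            exact and_congr Iff.rfl (forall_congr' fun a => forall_congr' fun ha =>
              forall_congr' fun s => imp_congr
                (ih B (by omega) k₁ k₂ (by omega) (by omega) _ _)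
                (exists_congr fun v => and_congr Iff.rfl
                  (ih C (by omega) k₁ k₂ (by omega) (by omega) _ _)))
        | _ =>
            dsimp only at hD
            exact and_congr Iff.rfl (forall_congr' fun a => forall_congr' fun ha =>
              forall_congr' fun s => exists_congr fun v => and_congr Iff.rfl
                (ih _ (by omega) k₁ k₂ (by omega) (by omega) _ _))

lemma rz_imp (V : Numbering) (M : Set ℕ) (f : Eval) (X Y : Fml) (ρ : ℕ → ℕ) (e : ℕ) :
    Rz V M f (X.imp Y) ρ e ↔
      e ∈ V.Idx 1 ∧ ∀ s, Rz V M f X ρ s →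
        ∃ v, V.φ 1 e ![s] = Part.some v ∧ Rz V M f Y ρ v := by
  have hX := size_pos X; have hY := size_pos Y
  show RzF V M f ((X.imp Y).size + 1) (X.imp Y) ρ e ↔ _
  rw [show (X.imp Y).size + 1 = (X.size + Y.size + 1) + 1 from rfl]
  simp only [RzF]
  exact and_congr Iff.rfl (forall_congr' fun s =>
    imp_congr (rzF_stable V M f (X.size + Y.size + 1) X (by omega) _ _ (by omega) (by omega) ρ s)
      (exists_congr fun v => and_congr Iff.rfl
        (rzF_stable V M f (X.size + Y.size + 1) Y (by omega) _ _ (by omega) (by omega) ρ v)))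


lemma vecPart_eq_some {n : ℕ} (F : Fin n → Part ℕ) (v : Fin n → ℕ)
    (h : ∀ i, F i = Part.some (v i)) : vecPart F = Part.some v := by
  have hd : ∀ i, (F i).Dom := fun i => by rw [h i]; trivial
  have hm : ∀ i, v i ∈ F i := fun i => by rw [h i]; exact Part.mem_some _
  exact Part.eq_some_iff.mpr ⟨hd, funext fun i => Part.get_eq_of_mem (hm i) (hd i)⟩

lemma vecPart_bind {n : ℕ} (F : Fin n → Part ℕ) (v : Fin n → ℕ) (g : PFn n)
    (h : ∀ i, F i = Part.some (v i)) : (vecPart F).bind g = g v := by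
  rw [vecPart_eq_some F v h, Part.bind_some]

lemma phi_cast (V : Numbering) {n n' : ℕ} (h : n = n') (e : ℕ) (x : Fin n' → ℕ) :
    V.φ n' e x = V.φ n e fun i => x (Fin.cast h i) := by subst h; rfl

lemma isV_ext (V : Numbering) {n : ℕ} {p q : PFn n} (h : ∀ x, p x = q x) :
    V.IsV n p → V.IsV n q := fun ⟨e, he, hv⟩ => ⟨e, he, fun x => (hv x).trans (h x)⟩

lemma compV (V : Numbering) (hcm : V.Cm) {n N : ℕ} (m : Fin n → ℕ)
    (hsup : Finset.univ.sup m = N) (hN : ∀ i, m i ≤ N)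
    (f : PFn n) (hf : V.IsV n f)
    (g : (i : Fin n) → PFn (m i)) (hg : ∀ i, V.IsV (m i) (g i)) :
    V.IsV N (fun x => (vecPart fun i => g i fun j => x (Fin.castLE (hN i) j)).bind f) := by
  obtain ⟨s, _, hs⟩ := hcm n m
  obtain ⟨e, he, hev⟩ := hf
  choose es hes hesv using hg
  obtain ⟨v, _, hvIdx, hv⟩ := hs e he es hes
  have hef : V.φ n e = f := funext hev
  refine ⟨v, hsup ▸ hvIdx, fun x => ?_⟩
  rw [phi_cast V hsup v x, hv, hef]
  simp only [hesv]
  rfl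

lemma compFull (V : Numbering) (hcm : V.Cm) {n N : ℕ} (hn : n ≠ 0)
    (f : PFn n) (hf : V.IsV n f) (g : Fin n → PFn N) (hg : ∀ i, V.IsV N (g i)) :
    V.IsV N (fun x => (vecPart fun i => g i x).bind f) := by
  have hsup : Finset.univ.sup (fun _ : Fin n => N) = N :=
    le_antisymm (Finset.sup_le fun i _ => le_rfl)
      (Finset.le_sup (f := fun _ : Fin n => N) (Finset.mem_univ ⟨0, Nat.pos_of_ne_zero hn⟩))
  exact compV V hcm _ hsup (fun _ => le_rfl) f hf g hg


/-- over an intuitionistic computability model, there is a single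
number realizing the S-axiom `(A→(B→C))→((A→B)→(A→C))` for all sentences
`A`, `B`, `C`. -/
theorem stmt7 (V : Numbering) (hV : V.Intu) (M : Set ℕ) (hM : M.Nonempty) (f : Eval) :
    ∃ e : ℕ, ∀ A B C : Fml, A.Closed → B.Closed → C.Closed →
      ∀ ρ : ℕ → ℕ, (∀ x, ρ x ∈ M) →
        Rz V M f ((A.imp (B.imp C)).imp ((A.imp B).imp (A.imp C))) ρ e := by
  obtain ⟨⟨hbf, hcm, hcn, hcs⟩, u, huV, huO⟩ := hV
  obtain ⟨cn, hcnV, hcnSpec⟩ := hcn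
  obtain ⟨kπ, hkπI, hkπE⟩ := hbf.1 1 0
  have hconst0 : ∀ k : ℕ, V.IsV 0 (fun _ => Part.some k) := by
    intro k
    obtain ⟨v, -, hvI, hvE⟩ := hcnSpec k
    exact ⟨v, hvI, hvE⟩
  have hcnπ1 : V.IsV 1 (fun x => cn ![x 0]) := by
    refine isV_ext V (fun x => ?_)
      (compFull V hcm (n := 1) (N := 1) (by omega) cn hcnV ![fun x => Part.some (x 0)]
        (by intro i; fin_cases i; exact hbf.1 1 0))
    exact vecPart_bind _ ![x 0] cn (by intro i; fin_cases i; rfl)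
  have hcnπ20 : V.IsV 2 (fun x => cn ![x 0]) := by
    refine isV_ext V (fun x => ?_)
      (compFull V hcm (n := 1) (N := 2) (by omega) cn hcnV ![fun x => Part.some (x 0)]
        (by intro i; fin_cases i; exact hbf.1 2 0))
    exact vecPart_bind _ ![x 0] cn (by intro i; fin_cases i; rfl)
  have hcnπ21 : V.IsV 2 (fun x => cn ![x 1]) := by
    refine isV_ext V (fun x => ?_)
      (compFull V hcm (n := 1) (N := 2) (by omega) cn hcnV ![fun x => Part.some (x 1)]
        (by intro i; fin_cases i; exact hbf.1 2 1))
    exact vecPart_bind _ ![x 1] cn (by intro i; fin_cases i; rfl)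
  have hG1 : V.IsV 3 (fun x => u ![x 0, x 2]) := by
    refine isV_ext V (fun x => ?_)
      (compFull V hcm (n := 2) (N := 3) (by omega) u huV
        ![fun x => Part.some (x 0), fun x => Part.some (x 2)]
        (by intro i; fin_cases i; exacts [hbf.1 3 0, hbf.1 3 2]))
    exact vecPart_bind _ ![x 0, x 2] u (by intro i; fin_cases i <;> rfl)
  have hG2 : V.IsV 3 (fun x => u ![x 1, x 2]) := by
    refine isV_ext V (fun x => ?_)
      (compFull V hcm (n := 2) (N := 3) (by omega) u huV
        ![fun x => Part.some (x 1), fun x => Part.some (x 2)]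
        (by intro i; fin_cases i; exacts [hbf.1 3 1, hbf.1 3 2]))
    exact vecPart_bind _ ![x 1, x 2] u (by intro i; fin_cases i <;> rfl)
  obtain ⟨d, hdI, hdE⟩ :=
    compFull V hcm (n := 2) (N := 3) (by omega) u huV
      ![fun y => u ![y 0, y 2], fun y => u ![y 1, y 2]]
      (by intro i; fin_cases i; exacts [hG1, hG2])
  obtain ⟨s₃, hs₃V, hs₃⟩ := hcm 3 ![0, 0, 1]
  obtain ⟨s₂, hs₂V, hs₂⟩ := hcm 2 ![0, 1]
  have hsup3 : Finset.univ.sup ![0, 0, 1] = 1 := by decide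
  have hsup2 : Finset.univ.sup ![0, 1] = 1 := by decide
  -- σ : the binary V-function (s,t) ↦ index of a ↦ F(s,t,a)
  obtain ⟨dσ, hdσI, hdσE⟩ :=
    compV V hcm (m := ![0, 2, 2, 0]) (N := 2) (by decide) (by decide) s₃ hs₃V
      (Fin.cons ((fun _ => Part.some d : PFn 0)) (Fin.cons ((fun x => cn ![x 0] : PFn 2))
        (Fin.cons ((fun x => cn ![x 1] : PFn 2)) (Fin.cons ((fun _ => Part.some kπ : PFn 0)) finZeroElim))))
      (by intro i; fin_cases i; exacts [hconst0 d, hcnπ20, hcnπ21, hconst0 kπ])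
  -- σ₁ : the unary V-function s ↦ index of t ↦ σ(s,t)
  obtain ⟨e₀, he₀I, he₀E⟩ :=
    compV V hcm (m := ![0, 1, 0]) (N := 1) (by decide) (by decide) s₂ hs₂V
      (Fin.cons ((fun _ => Part.some dσ : PFn 0)) (Fin.cons ((fun x => cn ![x 0] : PFn 1))
        (Fin.cons ((fun _ => Part.some kπ : PFn 0)) finZeroElim)))
      (by intro i; fin_cases i; exacts [hconst0 dσ, hcnπ1, hconst0 kπ])
  refine ⟨e₀, ?_⟩
  intro A B C _ _ _ ρ _
  rw [rz_imp]
  refine ⟨he₀I, fun s hs => ?_⟩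
  rw [rz_imp] at hs
  obtain ⟨hsI, hs2⟩ := hs
  obtain ⟨ks, hks, hksI, hksE⟩ := hcnSpec s
  obtain ⟨e₂, he₂eq, he₂I, he₂E⟩ :=
    hs₂ dσ hdσI ![ks, kπ] (by intro i; fin_cases i; exacts [hksI, hkπI])
  refine ⟨e₂, ?_, ?_⟩
  · refine (he₀E ![s]).trans ?_
    refine (vecPart_bind _ ![dσ, ks, kπ] s₂ ?_).trans he₂eq
    intro i; fin_cases i
    · rfl
    · exact hks
    · rfl
  · rw [rz_imp]
    refine ⟨hsup2 ▸ he₂I, fun t ht => ?_⟩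
    rw [rz_imp] at ht
    obtain ⟨htI, ht2⟩ := ht
    obtain ⟨kt, hkt, hktI, hktE⟩ := hcnSpec t
    obtain ⟨e₃, he₃eq, he₃I, he₃E⟩ :=
      hs₃ d hdI ![ks, kt, kπ] (by intro i; fin_cases i; exacts [hksI, hktI, hkπI])
    refine ⟨e₃, ?_, ?_⟩
    · rw [phi_cast V hsup2 e₂ ![t], he₂E]
      refine (vecPart_bind _ ![s, t] _ ?_).trans ?_
      · intro i; fin_cases i
        · exact hksE _
        · exact hkπE _
      · refine (hdσE ![s, t]).trans ?_
        refine (vecPart_bind _ ![d, ks, kt, kπ] s₃ ?_).trans he₃eq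
        intro i; fin_cases i
        · rfl
        · exact hks
        · exact hkt
        · rfl
    · rw [rz_imp]
      refine ⟨hsup3 ▸ he₃I, fun a ha => ?_⟩
      obtain ⟨p, hsp, hp⟩ := hs2 a ha
      rw [rz_imp] at hp
      obtain ⟨hpI, hp2⟩ := hp
      obtain ⟨q, htq, hq⟩ := ht2 a ha
      obtain ⟨w, hpw, hw⟩ := hp2 q hq
      have hu1 : u ![s, a] = Part.some p :=
        (huO s hsI ![a] (by rw [hsp]; trivial)).trans hsp
      have hu2 : u ![t, a] = Part.some q :=
        (huO t htI ![a] (by rw [htq]; trivial)).trans htq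
      have hu3 : u ![p, q] = Part.some w :=
        (huO p hpI ![q] (by rw [hpw]; trivial)).trans hpw
      refine ⟨w, ?_, hw⟩
      rw [phi_cast V hsup3 e₃ ![a], he₃E]
      refine (vecPart_bind _ ![s, t, a] _ ?_).trans ?_
      · intro i; fin_cases i
        · exact hksE _
        · exact hktE _
        · exact hkπE _
      · refine (hdE ![s, t, a]).trans ?_
        refine (vecPart_bind _ ![p, q] u ?_).trans hu3
        intro i; fin_cases i
        · exact hu1
        · exact hu2

end GenReal
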